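/- Let ρ be the canonical two-qubit state with parameters mx, my, mz, m'x, m'y, m'z, Cxx, Cyy, Czz, assumed positive semidefinite, and suppose my = 0 and Cyy = 0. Then for every α : ℝ, Bob's normalized reduced states after Alice's two operations coincide: (Tr_A ρ₊)/Re(trace ρ₊) = (Tr_A ρ₋)/Re(trace ρ₋); i.e., if the shared state has no imaginary y-components, Bob's subsystem carries no information about Alice's operation. -/

import Mathlib

open Matrix Kronecker Complex
open scoped ComplexOrder

noncomputable section

/-- Pauli matrix `σx`. -/
def σx : Matrix (Fin 2) (Fin 2) ℂ := !![0, 1; 1, 0]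

/-- Pauli matrix `σy`. -/
def σy : Matrix (Fin 2) (Fin 2) ℂ := !![0, -Complex.I; Complex.I, 0]

/-- Pauli matrix `σz`. -/
def σz : Matrix (Fin 2) (Fin 2) ℂ := !![1, 0; 0, -1]

/-- The simulated PT-symmetric evolution operator at the chosen time. -/
def Upt (α : ℝ) : Matrix (Fin 2) (Fin 2) ℂ :=
  !![(Real.sin α : ℂ), -Complex.I; -Complex.I, -(Real.sin α : ℂ)]

/-- Alice's operation `A₊` (do nothing). -/
def Apos : Matrix (Fin 2) (Fin 2) ℂ := 1

/-- Alice's operation `A₋` (bit flip `σx`). -/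
def Aneg : Matrix (Fin 2) (Fin 2) ℂ := σx

/-- Unnormalized post-selected state after Alice applies `A₊` followed by the
simulated PT evolution. -/
def postPlus (α : ℝ) (ρ : Matrix (Fin 2 × Fin 2) (Fin 2 × Fin 2) ℂ) :
    Matrix (Fin 2 × Fin 2) (Fin 2 × Fin 2) ℂ :=
  ((Upt α * Apos) ⊗ₖ (1 : Matrix (Fin 2) (Fin 2) ℂ)) * ρ *
    ((Upt α * Apos) ⊗ₖ (1 : Matrix (Fin 2) (Fin 2) ℂ))ᴴ

/-- Unnormalized post-selected state after Alice applies `A₋` followed by the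
simulated PT evolution. -/
def postMinus (α : ℝ) (ρ : Matrix (Fin 2 × Fin 2) (Fin 2 × Fin 2) ℂ) :
    Matrix (Fin 2 × Fin 2) (Fin 2 × Fin 2) ℂ :=
  ((Upt α * Aneg) ⊗ₖ (1 : Matrix (Fin 2) (Fin 2) ℂ)) * ρ *
    ((Upt α * Aneg) ⊗ₖ (1 : Matrix (Fin 2) (Fin 2) ℂ))ᴴ

/-- Probability that Bob obtains outcome `Π` given Alice applied `A₊`. -/
def Pplus (α : ℝ) (ρ : Matrix (Fin 2 × Fin 2) (Fin 2 × Fin 2) ℂ)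
    (Pi : Matrix (Fin 2) (Fin 2) ℂ) : ℝ :=
  ((((1 : Matrix (Fin 2) (Fin 2) ℂ) ⊗ₖ Pi) * postPlus α ρ).trace).re /
    ((postPlus α ρ).trace).re

/-- Probability that Bob obtains outcome `Π` given Alice applied `A₋`. -/
def Pminus (α : ℝ) (ρ : Matrix (Fin 2 × Fin 2) (Fin 2 × Fin 2) ℂ)
    (Pi : Matrix (Fin 2) (Fin 2) ℂ) : ℝ :=
  ((((1 : Matrix (Fin 2) (Fin 2) ℂ) ⊗ₖ Pi) * postMinus α ρ).trace).re /
    ((postMinus α ρ).trace).re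

/-- Bob's `σy`-measurement projector onto `|+_y⟩ = (|0⟩ + i|1⟩)/√2`. -/
def Piy : Matrix (Fin 2) (Fin 2) ℂ :=
  (1/2 : ℂ) • !![1, -Complex.I; Complex.I, 1]

/-- Bob's rank-one projector `Π(z,u)` for an arbitrary projective measurement. -/
def Pizu (z u : ℝ) : Matrix (Fin 2) (Fin 2) ℂ :=
  !![((Real.cos (z/2))^2 : ℂ),
     (Real.cos (z/2) : ℂ) * (Real.sin (z/2) : ℂ) * Complex.exp (-(Complex.I * u));
     (Real.cos (z/2) : ℂ) * (Real.sin (z/2) : ℂ) * Complex.exp (Complex.I * u),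
     ((Real.sin (z/2))^2 : ℂ)]

/-- The single-qubit state `|+⟩ = (|0⟩ + |1⟩)/√2`. -/
def ketPlus : Fin 2 → ℂ := ![((1 / Real.sqrt 2 : ℝ) : ℂ), ((1 / Real.sqrt 2 : ℝ) : ℂ)]

/-- The single-qubit state `|−⟩ = (|0⟩ − |1⟩)/√2`. -/
def ketMinus : Fin 2 → ℂ := ![((1 / Real.sqrt 2 : ℝ) : ℂ), ((-(1 / Real.sqrt 2) : ℝ) : ℂ)]

/-- The (normalized) pure state `|ψ_{β,γ}⟩ = (β|++⟩ + γ|−−⟩)/√(β²+γ²)`. -/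
def ψpure (β γ : ℝ) : Fin 2 × Fin 2 → ℂ := fun q =>
  ((β : ℂ) * (ketPlus q.1 * ketPlus q.2) + (γ : ℂ) * (ketMinus q.1 * ketMinus q.2)) /
    ((Real.sqrt (β^2 + γ^2) : ℝ) : ℂ)

/-- The pure two-qubit density matrix `ρ_{β,γ} = |ψ_{β,γ}⟩⟨ψ_{β,γ}|`. -/
def ρpure (β γ : ℝ) : Matrix (Fin 2 × Fin 2) (Fin 2 × Fin 2) ℂ :=
  Matrix.vecMulVec (ψpure β γ) (fun q => starRingEnd ℂ (ψpure β γ q))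

/-- The maximally entangled state `|ψ⁺⟩ = (|00⟩ + |11⟩)/√2`. -/
def ψmax : Fin 2 × Fin 2 → ℂ := fun q =>
  if q.1 = q.2 then ((1 / Real.sqrt 2 : ℝ) : ℂ) else 0

/-- The two-qubit Werner state `ρ_W(p) = p |ψ⁺⟩⟨ψ⁺| + ((1-p)/4) 1`. -/
def ρWerner (p : ℝ) : Matrix (Fin 2 × Fin 2) (Fin 2 × Fin 2) ℂ :=
  (p : ℂ) • Matrix.vecMulVec ψmax (fun q => starRingEnd ℂ (ψmax q)) +
    (((1 - p) / 4 : ℝ) : ℂ) • 1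

/-- The canonical two-qubit state with magnetizations `mx my mz` (Alice),
`nx ny nz` (Bob) and diagonal correlators `Cxx Cyy Czz`. -/
def ρcan (mx my mz nx ny nz Cxx Cyy Czz : ℝ) :
    Matrix (Fin 2 × Fin 2) (Fin 2 × Fin 2) ℂ :=
  (1/4 : ℂ) • ((1 : Matrix (Fin 2 × Fin 2) (Fin 2 × Fin 2) ℂ)
    + (mx : ℂ) • (σx ⊗ₖ (1 : Matrix (Fin 2) (Fin 2) ℂ))
    + (my : ℂ) • (σy ⊗ₖ (1 : Matrix (Fin 2) (Fin 2) ℂ))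
    + (mz : ℂ) • (σz ⊗ₖ (1 : Matrix (Fin 2) (Fin 2) ℂ))
    + (nx : ℂ) • ((1 : Matrix (Fin 2) (Fin 2) ℂ) ⊗ₖ σx)
    + (ny : ℂ) • ((1 : Matrix (Fin 2) (Fin 2) ℂ) ⊗ₖ σy)
    + (nz : ℂ) • ((1 : Matrix (Fin 2) (Fin 2) ℂ) ⊗ₖ σz)
    + (Cxx : ℂ) • (σx ⊗ₖ σx)
    + (Cyy : ℂ) • (σy ⊗ₖ σy)
    + (Czz : ℂ) • (σz ⊗ₖ σz))

/-- Bob's reduced matrix: the partial trace over Alice's subsystem. -/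
def ptraceA (X : Matrix (Fin 2 × Fin 2) (Fin 2 × Fin 2) ℂ) :
    Matrix (Fin 2) (Fin 2) ℂ :=
  Matrix.of fun i j => ∑ k : Fin 2, X (k, i) (k, j)

/-- The positive semidefinite square root of a positive semidefinite matrix
(the definition `Matrix.PosSemidef.sqrt` of the older Mathlib, since removed). -/
def Matrix.PosSemidef.sqrt {n : Type*} [Fintype n] [DecidableEq n] {𝕜 : Type*} [RCLike 𝕜]
    {A : Matrix n n 𝕜} (hA : A.PosSemidef) : Matrix n n 𝕜 :=
  (hA.1.eigenvectorUnitary : Matrix n n 𝕜) * diagonal ((↑) ∘ (√·) ∘ hA.1.eigenvalues) *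
    (star (hA.1.eigenvectorUnitary : Matrix n n 𝕜))

/-- The trace distance `T(A,B) = (1/2) tr √((A-B)ᴴ (A-B))`, where the square
root is the positive semidefinite square root. -/
def traceDist (A B : Matrix (Fin 2) (Fin 2) ℂ) : ℝ :=
  (1/2) * (((Matrix.posSemidef_conjTranspose_mul_self (A - B)).sqrt).trace).re

/-! For `M = U_α A_±`, Bob's reduced matrix of `(M ⊗ 1) ρ (M ⊗ 1)ᴴ` equals `Tr_A [(MᴴM ⊗ 1) ρ]`,
so it depends on Alice's operation only through `MᴴM`. Here `U_αᴴ U_α = (1 + sin² α) + 2 sin α σy`,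
and conjugating by `A₋ = σx` only flips the sign of the `σy` term. Since
`Tr_A [(σy ⊗ 1) ρ] = (my + Cyy σy) / 2` vanishes when `my = Cyy = 0`, both reduced matrices equal
`(1 + sin² α) Tr_A ρ`; in particular their traces, the normalizations, agree too. -/

lemma ptraceA_add (X Y : Matrix (Fin 2 × Fin 2) (Fin 2 × Fin 2) ℂ) :
    ptraceA (X + Y) = ptraceA X + ptraceA Y := by
  ext i j
  simp [ptraceA, Finset.sum_add_distrib]

lemma ptraceA_smul (c : ℂ) (X : Matrix (Fin 2 × Fin 2) (Fin 2 × Fin 2) ℂ) :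
    ptraceA (c • X) = c • ptraceA X := by
  ext i j
  simp [ptraceA, mul_add]

lemma trace_ptraceA (X : Matrix (Fin 2 × Fin 2) (Fin 2 × Fin 2) ℂ) :
    (ptraceA X).trace = X.trace := by
  simp [ptraceA, Matrix.trace, Fintype.sum_prod_type, add_add_add_comm]

lemma ptraceA_kronecker_one_mul_mul_conjTranspose (M : Matrix (Fin 2) (Fin 2) ℂ)
    (X : Matrix (Fin 2 × Fin 2) (Fin 2 × Fin 2) ℂ) :
    ptraceA ((M ⊗ₖ (1 : Matrix (Fin 2) (Fin 2) ℂ)) * X * (M ⊗ₖ (1 : Matrix (Fin 2) (Fin 2) ℂ))ᴴ) =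
      ptraceA (((Mᴴ * M) ⊗ₖ (1 : Matrix (Fin 2) (Fin 2) ℂ)) * X) := by
  ext i j
  fin_cases i <;> fin_cases j <;>
    simp [ptraceA, Matrix.mul_apply, Fintype.sum_prod_type, Fin.sum_univ_two,
      Matrix.one_apply] <;> ring

lemma ptraceA_kronecker_one_mul_mul_conjTranspose_of_gram {M : Matrix (Fin 2) (Fin 2) ℂ}
    {a b : ℂ} (hM : Mᴴ * M = a • 1 + b • σy) (X : Matrix (Fin 2 × Fin 2) (Fin 2 × Fin 2) ℂ) :
    ptraceA ((M ⊗ₖ (1 : Matrix (Fin 2) (Fin 2) ℂ)) * X * (M ⊗ₖ (1 : Matrix (Fin 2) (Fin 2) ℂ))ᴴ) =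
      a • ptraceA X + b • ptraceA ((σy ⊗ₖ (1 : Matrix (Fin 2) (Fin 2) ℂ)) * X) := by
  rw [ptraceA_kronecker_one_mul_mul_conjTranspose, hM, add_kronecker, smul_kronecker,
    smul_kronecker, one_kronecker_one, Matrix.add_mul, smul_mul_assoc, smul_mul_assoc,
    Matrix.one_mul, ptraceA_add, ptraceA_smul, ptraceA_smul]

lemma σx_conjTranspose : σxᴴ = σx := by
  ext i j
  fin_cases i <;> fin_cases j <;> simp [σx]

lemma σx_mul_σx : σx * σx = 1 := by
  ext i j
  fin_cases i <;> fin_cases j <;> simp [σx]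

lemma σx_mul_σy_mul_σx : σx * σy * σx = -σy := by
  ext i j
  fin_cases i <;> fin_cases j <;> simp [σx, σy]

lemma conjTranspose_Upt_mul_Upt (α : ℝ) :
    (Upt α)ᴴ * Upt α = ((1 + Real.sin α ^ 2 : ℝ) : ℂ) • 1 + ((2 * Real.sin α : ℝ) : ℂ) • σy := by
  ext i j
  fin_cases i <;> fin_cases j <;>
    simp [Upt, σy, Matrix.mul_apply, Fin.sum_univ_two, -Complex.ofReal_sin] <;> ring

lemma conjTranspose_Upt_mul_σx_mul_Upt_mul_σx (α : ℝ) :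
    (Upt α * σx)ᴴ * (Upt α * σx) =
      ((1 + Real.sin α ^ 2 : ℝ) : ℂ) • 1 + (-((2 * Real.sin α : ℝ) : ℂ)) • σy := by
  have hconj : (Upt α * σx)ᴴ * (Upt α * σx) = σx * ((Upt α)ᴴ * Upt α) * σx := by
    simp only [conjTranspose_mul, σx_conjTranspose, Matrix.mul_assoc]
  rw [hconj, conjTranspose_Upt_mul_Upt, Matrix.mul_add, Matrix.add_mul, Matrix.mul_smul,
    Matrix.smul_mul, Matrix.mul_one, σx_mul_σx, Matrix.mul_smul, Matrix.smul_mul,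
    σx_mul_σy_mul_σx, smul_neg, neg_smul]

lemma ptraceA_σy_kronecker_one_mul_ρcan (mx my mz nx ny nz Cxx Cyy Czz : ℝ) :
    ptraceA ((σy ⊗ₖ (1 : Matrix (Fin 2) (Fin 2) ℂ)) * ρcan mx my mz nx ny nz Cxx Cyy Czz) =
      (1 / 2 : ℂ) • ((my : ℂ) • 1 + (Cyy : ℂ) • σy) := by
  ext i j
  fin_cases i <;> fin_cases j <;>
    simp [ptraceA, ρcan, σx, σy, σz, Matrix.mul_apply, Fintype.sum_prod_type,
      Fin.sum_univ_two, Matrix.one_apply] <;> ring_nf <;> simp only [Complex.I_sq] <;> ring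

theorem stmt14_general (mx my mz nx ny nz Cxx Cyy Czz : ℝ)
    (ρ : Matrix (Fin 2 × Fin 2) (Fin 2 × Fin 2) ℂ)
    (hρ : ρ = ρcan mx my mz nx ny nz Cxx Cyy Czz)
    (hmy : my = 0) (hCyy : Cyy = 0) :
    ∀ α : ℝ,
      (((postPlus α ρ).trace).re)⁻¹ • ptraceA (postPlus α ρ) =
        (((postMinus α ρ).trace).re)⁻¹ • ptraceA (postMinus α ρ) := by
  intro α
  have hσy : ptraceA ((σy ⊗ₖ (1 : Matrix (Fin 2) (Fin 2) ℂ)) * ρ) = 0 := by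
    simp [hρ, ptraceA_σy_kronecker_one_mul_ρcan, hmy, hCyy]
  have hreduced : ptraceA (postPlus α ρ) = ptraceA (postMinus α ρ) := by
    rw [postPlus, postMinus, Apos, Aneg, Matrix.mul_one,
      ptraceA_kronecker_one_mul_mul_conjTranspose_of_gram (conjTranspose_Upt_mul_Upt α),
      ptraceA_kronecker_one_mul_mul_conjTranspose_of_gram
        (conjTranspose_Upt_mul_σx_mul_Upt_mul_σx α), hσy, smul_zero, smul_zero]
  rw [← trace_ptraceA (postPlus α ρ), ← trace_ptraceA (postMinus α ρ), hreduced]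

/-- If the shared canonical state has no `y`-components (`my = 0`, `Cyy = 0`),
then for every `α` Bob's normalized reduced states after Alice's two operations
coincide: Bob's subsystem carries no information about Alice's operation. -/
theorem stmt14 (mx my mz nx ny nz Cxx Cyy Czz : ℝ)
    (ρ : Matrix (Fin 2 × Fin 2) (Fin 2 × Fin 2) ℂ)
    (hρ : ρ = ρcan mx my mz nx ny nz Cxx Cyy Czz)
    (hpsd : ρ.PosSemidef)
    (hmy : my = 0) (hCyy : Cyy = 0) :
    ∀ α : ℝ,
      (((postPlus α ρ).trace).re)⁻¹ • ptraceA (postPlus α ρ) =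
        (((postMinus α ρ).trace).re)⁻¹ • ptraceA (postMinus α ρ) :=
  stmt14_general mx my mz nx ny nz Cxx Cyy Czz ρ hρ hmy hCyy
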